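/- arXiv:2211.12818 — 3 statements merged into one kernel-verified Lean document; each statement's English description precedes it below -/
import Mathlib

section
/- Let A : (-ε₀,ε₀) × closure(B_{n-1}(0,1)) × ℝ → ℝ and suppose the map M_A taking (ε,ζ) to the function z ↦ A(ε,z,ζ) is real analytic from (-ε₀,ε₀) × ℝ to C^{0,α}(closure B_{n-1}(0,1)). Then for every open bounded interval J of ℝ and every compact subset E of (-ε₀,ε₀) there exists C > 0 such that sup_{ε∈E} ‖A(ε,·,·)‖_{C^{0,α}(closure B_{n-1}(0,1) × closure J)} ≤ C. -/
/-- `holderNormLE a s f c` : the `C^{0,α}` norm of `f` on `s` (sup norm plus `a`-Hölder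
seminorm) is at most `c`. -/
def holderNormLE {X : Type*} [PseudoMetricSpace X] (a : ℝ) (s : Set X) (f : X → ℝ)
    (c : ℝ) : Prop :=
  ∃ m h : ℝ, 0 ≤ m ∧ 0 ≤ h ∧ (∀ x ∈ s, |f x| ≤ m) ∧
    (∀ x ∈ s, ∀ y ∈ s, |f x - f y| ≤ h * dist x y ^ a) ∧ m + h ≤ c

/-!
Near each point `(εₜ, ζₜ)` the double power series, whose coefficients have `C^{0,α}` norms at
most `M ρ⁻ʲ⁻ᵏ`, is dominated on the box of half radius by the geometric series `Σ 2⁻ʲ⁻ᵏ`; this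
bounds `A`, its `α`-Hölder quotient in `z` and (through `|vʲ - v'ʲ| ≤ j (ρ/2)ʲ⁻¹ |v - v'|`) its
Lipschitz quotient in `ζ`. Compactness of `K × [p, q]` and a Lebesgue number make these bounds
uniform on balls of a fixed radius `δ`; points at distance `≥ δ` are handled by the sup bound.
-/

open Metric

lemma HasSum.prod_mul_geometric_two {f : ℕ → ℝ} {a : ℝ} (hf : HasSum f a) (hf0 : 0 ≤ f) :
    HasSum (fun p : ℕ × ℕ => f p.1 * (1 / 2) ^ p.2) (a * 2) :=
  hf.mul hasSum_geometric_two <|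
    hf.summable.mul_of_nonneg summable_geometric_two hf0 fun _ => by positivity

lemma hasSum_coe_mul_geometric_two : HasSum (fun j : ℕ => (j : ℝ) * (1 / 2) ^ j) 2 := by
  have h := hasSum_coe_mul_geometric_of_norm_lt_one (𝕜 := ℝ) (r := 1 / 2) (by norm_num)
  norm_num at h
  exact h

lemma one_div_pow_add_mul_half_pow {ρ : ℝ} (hρ : ρ ≠ 0) (j k : ℕ) :
    (1 / ρ) ^ (j + k) * (ρ / 2) ^ k * (ρ / 2) ^ j = (1 / 2) ^ j * (1 / 2) ^ k := by
  simp only [one_div, pow_add, div_pow, inv_pow]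
  field_simp

section PowerSeries

variable {b : ℕ → ℕ → ℝ} {M ρ u v : ℝ}

lemma abs_le_of_hasSum_of_coeff_bound (hρ : 0 < ρ) (hb : ∀ j k, |b j k| ≤ M * (1 / ρ) ^ (j + k))
    (hu : |u| ≤ ρ / 2) (hv : |v| ≤ ρ / 2) {S : ℝ}
    (hS : HasSum (fun p : ℕ × ℕ => b p.1 p.2 * u ^ p.2 * v ^ p.1) S) :
    |S| ≤ M * 4 := by
  have hg : HasSum (fun p : ℕ × ℕ => M * ((1 / 2) ^ p.1 * (1 / 2) ^ p.2)) (M * (2 * 2)) :=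
    (hasSum_geometric_two.prod_mul_geometric_two fun _ => by positivity).mul_left M
  refine (hS.norm_le_of_bounded hg fun ⟨j, k⟩ => ?_).trans_eq (by ring)
  calc |b j k * u ^ k * v ^ j| = |b j k| * |u| ^ k * |v| ^ j := by
        rw [abs_mul, abs_mul, abs_pow, abs_pow]
    _ ≤ M * (1 / ρ) ^ (j + k) * (ρ / 2) ^ k * (ρ / 2) ^ j := by
        have hbjk := hb j k
        have hM : 0 ≤ M * (1 / ρ) ^ (j + k) := (abs_nonneg _).trans hbjk
        gcongr
    _ = M * ((1 / 2) ^ j * (1 / 2) ^ k) := by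
        rw [mul_assoc M, mul_assoc M, one_div_pow_add_mul_half_pow hρ.ne']

lemma abs_sub_le_of_hasSum_of_coeff_bound (hρ : 0 < ρ)
    (hb : ∀ j k, |b j k| ≤ M * (1 / ρ) ^ (j + k)) (hu : |u| ≤ ρ / 2) (hv : |v| ≤ ρ / 2)
    {v' S S' : ℝ} (hv' : |v'| ≤ ρ / 2)
    (hS : HasSum (fun p : ℕ × ℕ => b p.1 p.2 * u ^ p.2 * v ^ p.1) S)
    (hS' : HasSum (fun p : ℕ × ℕ => b p.1 p.2 * u ^ p.2 * v' ^ p.1) S') :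
    |S - S'| ≤ 8 * M / ρ * |v - v'| := by
  have hdiff : HasSum (fun p : ℕ × ℕ => b p.1 p.2 * u ^ p.2 * (v ^ p.1 - v' ^ p.1)) (S - S') := by
    simpa only [mul_sub] using hS.sub hS'
  set c := 2 * M / ρ * |v - v'|
  have hg : HasSum (fun p : ℕ × ℕ => c * ((p.1 : ℝ) * (1 / 2) ^ p.1 * (1 / 2) ^ p.2))
      (c * (2 * 2)) :=
    (hasSum_coe_mul_geometric_two.prod_mul_geometric_two fun _ => by positivity).mul_left c
  refine (hdiff.norm_le_of_bounded hg fun ⟨j, k⟩ => ?_).trans_eq (by ring)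
  -- `|v ^ j - v' ^ j| ≤ j (ρ/2)^(j-1) |v - v'|`, written without truncated subtraction
  have hpow : |v ^ j - v' ^ j| * (ρ / 2) ≤ |v - v'| * j * (ρ / 2) ^ j := by
    rcases j with _ | j
    · simp
    calc |v ^ (j + 1) - v' ^ (j + 1)| * (ρ / 2)
        ≤ |v - v'| * (j + 1 : ℕ) * max |v| |v'| ^ j * (ρ / 2) := by
          gcongr; exact abs_pow_sub_pow_le ..
      _ ≤ |v - v'| * (j + 1 : ℕ) * (ρ / 2) ^ j * (ρ / 2) := by gcongr; exact max_le hv hv'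
      _ = |v - v'| * (j + 1 : ℕ) * (ρ / 2) ^ (j + 1) := by ring
  have hbjk := hb j k
  have hM : 0 ≤ M * (1 / ρ) ^ (j + k) := (abs_nonneg _).trans hbjk
  rw [← mul_le_mul_iff_of_pos_right (half_pos hρ)]
  calc |b j k * u ^ k * (v ^ j - v' ^ j)| * (ρ / 2)
      = |b j k| * |u| ^ k * (|v ^ j - v' ^ j| * (ρ / 2)) := by
        rw [abs_mul, abs_mul, abs_pow]; ring
    _ ≤ M * (1 / ρ) ^ (j + k) * (ρ / 2) ^ k * (|v - v'| * j * (ρ / 2) ^ j) := by gcongr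
    _ = M * |v - v'| * j * ((1 / ρ) ^ (j + k) * (ρ / 2) ^ k * (ρ / 2) ^ j) := by ring
    _ = c * (j * (1 / 2) ^ j * (1 / 2) ^ k) * (ρ / 2) := by
        rw [one_div_pow_add_mul_half_pow hρ.ne']
        simp only [c]
        field_simp

end PowerSeries

lemma holderNormLE.abs_le {X : Type*} [PseudoMetricSpace X] {α : ℝ} {s : Set X} {f : X → ℝ}
    {c : ℝ} (hf : holderNormLE α s f c) {x : X} (hx : x ∈ s) : |f x| ≤ c := by
  obtain ⟨m, h, -, hh, hm, -, hmh⟩ := hf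
  linarith [hm x hx]

lemma holderNormLE.abs_sub_le {X : Type*} [PseudoMetricSpace X] {α : ℝ} {s : Set X}
    {f : X → ℝ} {c : ℝ} (hf : holderNormLE α s f c) {x y : X} (hx : x ∈ s) (hy : y ∈ s) :
    |f x - f y| ≤ c * dist x y ^ α := by
  obtain ⟨m, h, hm, -, -, hh, hmh⟩ := hf
  exact (hh x hx y hy).trans (by gcongr; linarith)

lemma holderNormLE_of_forall_dist_lt {X : Type*} [PseudoMetricSpace X] {α δ B L : ℝ} {s : Set X}
    {f : X → ℝ} (hα : 0 ≤ α) (hδ : 0 < δ) (hB0 : 0 ≤ B) (hL0 : 0 ≤ L)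
    (hB : ∀ x ∈ s, |f x| ≤ B)
    (hL : ∀ x ∈ s, ∀ y ∈ s, dist x y < δ → |f x - f y| ≤ L * dist x y ^ α) :
    holderNormLE α s f (B + (L + 2 * B / δ ^ α)) := by
  refine ⟨B, L + 2 * B / δ ^ α, hB0, by positivity, hB, fun x hx y hy => ?_, le_rfl⟩
  have hd : 0 ≤ dist x y ^ α := by positivity
  have hBδ : 0 ≤ 2 * B / δ ^ α := by positivity
  rcases lt_or_ge (dist x y) δ with hxy | hxy
  · nlinarith [hL x hx y hy hxy]
  · calc |f x - f y| ≤ |f x| + |f y| := abs_sub _ _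
      _ ≤ 2 * B / δ ^ α * δ ^ α := by
          rw [div_mul_cancel₀ _ (by positivity)]; linarith [hB x hx, hB y hy]
      _ ≤ (L + 2 * B / δ ^ α) * dist x y ^ α := by
          have : δ ^ α ≤ dist x y ^ α := by gcongr
          nlinarith

lemma IsCompact.exists_uniform_of_local {Y : Type*} [PseudoMetricSpace Y] {S : Set Y}
    (hS : IsCompact S) {P : ℝ → Set Y → Prop}
    (hP : ∀ {B B' : ℝ} {U V : Set Y}, B ≤ B' → V ⊆ U → P B U → P B' V)
    (hloc : ∀ x ∈ S, ∃ r > 0, ∃ B, P B (ball x r)) :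
    ∃ δ > 0, ∃ C > 0, ∀ y ∈ S, P C (ball y δ) := by
  choose! r hr B hB using hloc
  obtain ⟨t, htS, hcover⟩ := hS.elim_nhds_subcover (fun x => ball x (r x))
    fun x hx => ball_mem_nhds x (hr x hx)
  obtain ⟨δ, hδ, hleb⟩ := lebesgue_number_lemma_of_metric (c := fun i : t => ball (i : Y) (r i))
    hS (fun _ => isOpen_ball) (by simpa [Set.iUnion_subtype] using hcover)
  obtain ⟨C, hC⟩ := (t.finite_toSet.image B).bddAbove
  refine ⟨δ, hδ, max C 1, by positivity, fun y hy => ?_⟩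
  obtain ⟨⟨x, hxt⟩, hball⟩ := hleb y hy
  exact hP ((hC ⟨x, hxt, rfl⟩).trans (le_max_left _ _)) hball (hB x (htS x hxt))

section LocalBounds

variable {X : Type*} [PseudoMetricSpace X] (α : ℝ) (Z : Set X) (A : ℝ → X → ℝ → ℝ)

def HolderLipBoundOn (B : ℝ) (U : Set (ℝ × ℝ)) : Prop :=
  ∀ ε ζ ζ', (ε, ζ) ∈ U → (ε, ζ') ∈ U → ∀ z ∈ Z, ∀ z' ∈ Z,
    |A ε z ζ| ≤ B ∧ |A ε z ζ - A ε z' ζ'| ≤ B * (dist z z' ^ α + |ζ - ζ'|)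

variable {α Z A}

lemma HolderLipBoundOn.mono {B B' : ℝ} {U V : Set (ℝ × ℝ)} (hB : B ≤ B') (hVU : V ⊆ U)
    (h : HolderLipBoundOn α Z A B U) : HolderLipBoundOn α Z A B' V := by
  intro ε ζ ζ' hζ hζ' z hz z' hz'
  obtain ⟨h₁, h₂⟩ := h ε ζ ζ' (hVU hζ) (hVU hζ') z hz z' hz'
  exact ⟨h₁.trans hB, h₂.trans (by gcongr)⟩

lemma holderLipBoundOn_ball_of_hasSum {εt ζt M ρ : ℝ} (hρ : 0 < ρ) {a : ℕ → ℕ → X → ℝ}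
    (ha : ∀ j k, holderNormLE α Z (a j k) (M * (1 / ρ) ^ (j + k)))
    (hsum : ∀ ε ζ : ℝ, |ε - εt| < ρ → |ζ - ζt| < ρ → ∀ z ∈ Z,
      HasSum (fun p : ℕ × ℕ => a p.1 p.2 z * (ε - εt) ^ p.2 * (ζ - ζt) ^ p.1) (A ε z ζ)) :
    HolderLipBoundOn α Z A (M * 4 + 8 * M / ρ) (ball (εt, ζt) (ρ / 2)) := by
  intro ε ζ ζ' hζ hζ' z hz z' hz'
  simp only [mem_ball, Prod.dist_eq, Real.dist_eq, max_lt_iff] at hζ hζ'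
  have hsum' : ∀ ζ, |ζ - ζt| < ρ / 2 → ∀ z ∈ Z,
      HasSum (fun p : ℕ × ℕ => a p.1 p.2 z * (ε - εt) ^ p.2 * (ζ - ζt) ^ p.1) (A ε z ζ) :=
    fun ζ hζ z hz => hsum ε ζ (by linarith) (by linarith) z hz
  have hM : 0 ≤ M := by simpa using (ha 0 0).abs_le hz |>.trans' (abs_nonneg _)
  have hbound := abs_le_of_hasSum_of_coeff_bound hρ (fun j k => (ha j k).abs_le hz)
    hζ.1.le hζ.2.le (hsum' ζ hζ.2 z hz)
  have hholder : |A ε z ζ - A ε z' ζ| ≤ M * dist z z' ^ α * 4 := by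
    refine abs_le_of_hasSum_of_coeff_bound (b := fun j k => a j k z - a j k z') hρ
      (fun j k => ?_) hζ.1.le hζ.2.le
      (by simpa only [sub_mul] using (hsum' ζ hζ.2 z hz).sub (hsum' ζ hζ.2 z' hz'))
    exact ((ha j k).abs_sub_le hz hz').trans_eq (by ring)
  have hlip := abs_sub_le_of_hasSum_of_coeff_bound hρ (fun j k => (ha j k).abs_le hz')
    hζ.1.le hζ.2.le hζ'.2.le (hsum' ζ hζ.2 z' hz') (hsum' ζ' hζ'.2 z' hz')
  have hd : 0 ≤ dist z z' ^ α := by positivity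
  have hMρ : 0 ≤ 8 * M / ρ := by positivity
  refine ⟨by linarith, ?_⟩
  calc |A ε z ζ - A ε z' ζ'| ≤ |A ε z ζ - A ε z' ζ| + |A ε z' ζ - A ε z' ζ'| :=
        abs_sub_le _ _ _
    _ ≤ M * dist z z' ^ α * 4 + 8 * M / ρ * |(ζ - ζt) - (ζ' - ζt)| := add_le_add hholder hlip
    _ ≤ (M * 4 + 8 * M / ρ) * (dist z z' ^ α + |ζ - ζ'|) := by
        rw [sub_sub_sub_cancel_right]
        nlinarith [abs_nonneg (ζ - ζ')]

lemma HolderLipBoundOn.holderNormLE {I : Set ℝ} {ε δ B : ℝ} (hα : α ∈ Set.Icc 0 1)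
    (hδ : 0 < δ) (hδ1 : δ ≤ 1) (hB : 0 ≤ B)
    (h : ∀ ζ ∈ I, HolderLipBoundOn α Z A B (ball (ε, ζ) δ)) :
    holderNormLE α (Z ×ˢ I) (fun x => A ε x.1 x.2) (B + (2 * B + 2 * B / δ ^ α)) := by
  obtain ⟨hα0, hα1⟩ := hα
  refine holderNormLE_of_forall_dist_lt hα0 hδ hB (by positivity)
    (fun x hx => ((h x.2 hx.2) ε x.2 x.2 (mem_ball_self hδ) (mem_ball_self hδ)
      x.1 hx.1 x.1 hx.1).1) ?_
  rintro ⟨z, ζ⟩ ⟨hz, hζ⟩ ⟨z', ζ'⟩ ⟨hz', -⟩ hxy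
  have hdz : dist z z' ≤ dist (z, ζ) (z', ζ') := by rw [Prod.dist_eq]; exact le_max_left _ _
  have hdζ : |ζ - ζ'| ≤ dist (z, ζ) (z', ζ') := by
    rw [Prod.dist_eq, ← Real.dist_eq]; exact le_max_right _ _
  have hζ' : (ε, ζ') ∈ ball (ε, ζ) δ := by
    rw [mem_ball, Prod.dist_eq, dist_self, Real.dist_eq, abs_sub_comm]
    exact max_lt hδ (hdζ.trans_lt hxy)
  have hζα : |ζ - ζ'| ≤ dist (z, ζ) (z', ζ') ^ α :=
    (Real.self_le_rpow_of_le_one (abs_nonneg _) (by linarith) hα1).trans (by gcongr)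
  calc |A ε z ζ - A ε z' ζ'| ≤ B * (dist z z' ^ α + |ζ - ζ'|) :=
        ((h ζ hζ) ε ζ ζ' (mem_ball_self hδ) hζ' z hz z' hz').2
    _ ≤ B * (dist (z, ζ) (z', ζ') ^ α + dist (z, ζ) (z', ζ') ^ α) := by gcongr
    _ = 2 * B * dist (z, ζ) (z', ζ') ^ α := by ring

end LocalBounds

theorem stmt_8_general (n : ℕ) (ε₀ α : ℝ) (hα : α ∈ Set.Ioo (0 : ℝ) 1)
    (A : ℝ → EuclideanSpace ℝ (Fin (n - 1)) → ℝ → ℝ)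
    -- real analyticity of `(ε,ζ) ↦ A(ε,·,ζ)` into `C^{0,α}(closure B_{n-1}(0,1))`:
    -- local power series expansions with geometric `C^{0,α}` bounds on the coefficients
    (hA : ∀ εt ∈ Set.Ioo (-ε₀) ε₀, ∀ ζt : ℝ, ∃ M > (0 : ℝ), ∃ ρ ∈ Set.Ioo (0 : ℝ) 1,
      ∃ a : ℕ → ℕ → (EuclideanSpace ℝ (Fin (n - 1)) → ℝ),
        (∀ j k : ℕ, holderNormLE α (Metric.closedBall (0 : EuclideanSpace ℝ (Fin (n - 1))) 1)
          (a j k) (M * (1 / ρ) ^ (j + k))) ∧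
        ∀ ε ζ : ℝ, |ε - εt| < ρ → |ζ - ζt| < ρ →
          ∀ z ∈ Metric.closedBall (0 : EuclideanSpace ℝ (Fin (n - 1))) 1,
            HasSum (fun p : ℕ × ℕ => a p.1 p.2 z * (ε - εt) ^ p.2 * (ζ - ζt) ^ p.1) (A ε z ζ))
    (p q : ℝ) (K : Set ℝ) (hK : IsCompact K) (hKsub : K ⊆ Set.Ioo (-ε₀) ε₀) :
    ∃ C > (0 : ℝ), ∀ ε ∈ K,
      holderNormLE α
        ((Metric.closedBall (0 : EuclideanSpace ℝ (Fin (n - 1))) 1) ×ˢ Set.Icc p q)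
        (fun x => A ε x.1 x.2) C := by
  set Z := closedBall (0 : EuclideanSpace ℝ (Fin (n - 1))) 1
  have hloc : ∀ x ∈ K ×ˢ Set.Icc p q, ∃ r > 0, ∃ B, HolderLipBoundOn α Z A B (ball x r) := by
    rintro ⟨εt, ζt⟩ hx
    obtain ⟨M, -, ρ, hρ, a, ha, hsum⟩ := hA εt (hKsub hx.1) ζt
    exact ⟨ρ / 2, half_pos hρ.1, _, holderLipBoundOn_ball_of_hasSum hρ.1 ha hsum⟩
  obtain ⟨δ, hδ, B, hB, hunif⟩ :=
    (hK.prod isCompact_Icc).exists_uniform_of_local HolderLipBoundOn.mono hloc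
  set δ' := min δ 1
  have hδ' : 0 < δ' := lt_min hδ one_pos
  refine ⟨B + (2 * B + 2 * B / δ' ^ α), by positivity, fun ε hε => ?_⟩
  exact HolderLipBoundOn.holderNormLE (Set.Ioo_subset_Icc_self hα) hδ' (min_le_right _ _) hB.le
    fun ζ hζ => (hunif (ε, ζ) ⟨hε, hζ⟩).mono le_rfl (ball_subset_ball (min_le_left _ _))

theorem stmt_8 (n : ℕ) (hn : 2 ≤ n) (ε₀ α : ℝ) (hε₀ : 0 < ε₀) (hα : α ∈ Set.Ioo (0 : ℝ) 1)
    (A : ℝ → EuclideanSpace ℝ (Fin (n - 1)) → ℝ → ℝ)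
    -- real analyticity of `(ε,ζ) ↦ A(ε,·,ζ)` into `C^{0,α}(closure B_{n-1}(0,1))`:
    -- local power series expansions with geometric `C^{0,α}` bounds on the coefficients
    (hA : ∀ εt ∈ Set.Ioo (-ε₀) ε₀, ∀ ζt : ℝ, ∃ M > (0 : ℝ), ∃ ρ ∈ Set.Ioo (0 : ℝ) 1,
      ∃ a : ℕ → ℕ → (EuclideanSpace ℝ (Fin (n - 1)) → ℝ),
        (∀ j k : ℕ, holderNormLE α (Metric.closedBall (0 : EuclideanSpace ℝ (Fin (n - 1))) 1)
          (a j k) (M * (1 / ρ) ^ (j + k))) ∧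
        ∀ ε ζ : ℝ, |ε - εt| < ρ → |ζ - ζt| < ρ →
          ∀ z ∈ Metric.closedBall (0 : EuclideanSpace ℝ (Fin (n - 1))) 1,
            HasSum (fun p : ℕ × ℕ => a p.1 p.2 z * (ε - εt) ^ p.2 * (ζ - ζt) ^ p.1) (A ε z ζ))
    (p q : ℝ) (hpq : p < q) (K : Set ℝ) (hK : IsCompact K) (hKsub : K ⊆ Set.Ioo (-ε₀) ε₀) :
    ∃ C > (0 : ℝ), ∀ ε ∈ K,
      holderNormLE α
        ((Metric.closedBall (0 : EuclideanSpace ℝ (Fin (n - 1))) 1) ×ˢ Set.Icc p q)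
        (fun x => A ε x.1 x.2) C :=
  stmt_8_general n ε₀ α hα A hA p q K hK hKsub
end

section
/- Let A : (-ε₀,ε₀) × closure(B_{n-1}(0,1)) × ℝ → ℝ and suppose the map M_A taking (ε,ζ) to z ↦ A(ε,z,ζ) is real analytic from (-ε₀,ε₀) × ℝ to C^{1,α}(closure B_{n-1}(0,1)). Then for every open bounded interval J of ℝ and every compact set E ⊂ (-ε₀,ε₀) there exists C > 0 such that sup_{ε∈E} ‖A(ε,·,·)‖_{C^{1,α}(closure B_{n-1}(0,1) × closure J)} ≤ C. -/
open Metric Set Filter Topology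

/-!
Near a point `(εt, ζt)` the expansion `A(ε, z, ζ) = ∑ a_{jk}(z) (ε - εt)^k (ζ - ζt)^j` converges
in `C^{1,α}`: for `|ε - εt| ≤ ρ/2` and `ζ` in the slab `|ζ - ζt| ≤ ρ/2`, the product rule for
Hölder norms (on a set of diameter at most 2) bounds the `C^{1,α}` norm of the `(j, k)` term by
`O((j + 1)² 2^{-j-k})`, and a series of `C^{1,α}` functions with summable norms can be
differentiated term by term. Compactness of `K × [p, q]` makes the slab width `δ` and the bound
uniform. The slab bounds patch together: the derivatives at two points closer than `δ/2` are
compared inside one slab, and farther apart the Hölder quotient is at most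
`2 sup ‖Df‖ / (δ/2)^α`.
-/

/-- `c1holderNormLE a s f c` : `f` is differentiable on `s` and its `C^{1,α}` norm on `s`
(sup norm of `f`, plus sup norm of its differential within `s`, plus the `a`-Hölder
seminorm of the differential) is at most `c`. -/
def c1holderNormLE {X : Type*} [NormedAddCommGroup X] [NormedSpace ℝ X]
    (a : ℝ) (s : Set X) (f : X → ℝ) (c : ℝ) : Prop :=
  DifferentiableOn ℝ f s ∧
  ∃ m₀ m₁ h : ℝ, 0 ≤ m₀ ∧ 0 ≤ m₁ ∧ 0 ≤ h ∧
    (∀ x ∈ s, |f x| ≤ m₀) ∧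
    (∀ x ∈ s, ‖fderivWithin ℝ f s x‖ ≤ m₁) ∧
    (∀ x ∈ s, ∀ y ∈ s, ‖fderivWithin ℝ f s x - fderivWithin ℝ f s y‖ ≤ h * dist x y ^ a) ∧
    m₀ + m₁ + h ≤ c

theorem le_two_mul_rpow_of_le_two {α d : ℝ} (hα₀ : 0 ≤ α) (hα₁ : α ≤ 1) (hd₀ : 0 ≤ d)
    (hd₂ : d ≤ 2) : d ≤ 2 * d ^ α := by
  rcases hd₀.eq_or_lt with rfl | hd₀
  · positivity
  calc d = d ^ α * d ^ (1 - α) := by rw [← Real.rpow_add hd₀, add_sub_cancel, Real.rpow_one]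
    _ ≤ d ^ α * 2 ^ (1 - α) := by gcongr
    _ ≤ d ^ α * 2 ^ (1 : ℝ) := by gcongr <;> linarith
    _ = 2 * d ^ α := by rw [Real.rpow_one, mul_comm]

theorem pow_sub_le_pow_div_sq {x : ℝ} (hx₀ : 0 < x) (hx₁ : x ≤ 1) {m : ℕ} (hm : m ≤ 2) (j : ℕ) :
    x ^ (j - m) ≤ x ^ j / x ^ 2 := by
  rw [le_div_iff₀ (by positivity)]
  calc x ^ (j - m) * x ^ 2 ≤ x ^ (j - m) * x ^ (min j m) :=
        mul_le_mul_of_nonneg_left (pow_le_pow_of_le_one hx₀.le hx₁ (by omega)) (by positivity)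
    _ = x ^ j := by rw [← pow_add]; congr 1; omega

theorem norm_smul_sub_smul_le {V : Type*} [SeminormedAddCommGroup V] [NormedSpace ℝ V]
    (a b : ℝ) (v w : V) : ‖a • v - b • w‖ ≤ |a - b| * ‖v‖ + |b| * ‖v - w‖ := by
  rw [show a • v - b • w = (a - b) • v + b • (v - w) by rw [sub_smul, smul_sub]; abel]
  refine (norm_add_le _ _).trans_eq ?_
  rw [norm_smul, norm_smul, Real.norm_eq_abs, Real.norm_eq_abs]

variable {X Y : Type*} [NormedAddCommGroup X] [NormedSpace ℝ X]
  [NormedAddCommGroup Y] [NormedSpace ℝ Y]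

/-- The derivative `f'` is explicit rather than `fderivWithin ℝ f s`, so that the bound survives
restriction to subsets of `s` on which derivatives are not unique. -/
structure HasC1HolderBound (α : ℝ) (s : Set X) (f : X → ℝ) (f' : X → X →L[ℝ] ℝ) (C : ℝ) :
    Prop where
  nonneg : 0 ≤ C
  hasFDerivWithinAt : ∀ x ∈ s, HasFDerivWithinAt f (f' x) s x
  abs_le : ∀ x ∈ s, |f x| ≤ C
  norm_le : ∀ x ∈ s, ‖f' x‖ ≤ C
  norm_sub_le : ∀ x ∈ s, ∀ y ∈ s, ‖f' x - f' y‖ ≤ C * dist x y ^ α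

theorem c1holderNormLE.hasC1HolderBound {α c : ℝ} {s : Set X} {f : X → ℝ}
    (h : c1holderNormLE α s f c) : HasC1HolderBound α s f (fderivWithin ℝ f s) c := by
  obtain ⟨hf, m₀, m₁, m₂, hm₀, hm₁, hm₂, h₀, h₁, h₂, hc⟩ := h
  refine ⟨by linarith, fun x hx => (hf x hx).hasFDerivWithinAt,
    fun x hx => (h₀ x hx).trans (by linarith), fun x hx => (h₁ x hx).trans (by linarith),
    fun x hx y hy => (h₂ x hx y hy).trans ?_⟩
  gcongr
  linarith

namespace HasC1HolderBound

variable {α C C' : ℝ} {s t : Set X} {f g : X → ℝ} {f' g' : X → X →L[ℝ] ℝ}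

theorem mono_const (h : HasC1HolderBound α s f f' C) (hC : C ≤ C') :
    HasC1HolderBound α s f f' C' where
  nonneg := h.nonneg.trans hC
  hasFDerivWithinAt := h.hasFDerivWithinAt
  abs_le x hx := (h.abs_le x hx).trans hC
  norm_le x hx := (h.norm_le x hx).trans hC
  norm_sub_le x hx y hy := (h.norm_sub_le x hx y hy).trans (by gcongr)

theorem mono (h : HasC1HolderBound α s f f' C) (hts : t ⊆ s) : HasC1HolderBound α t f f' C where
  nonneg := h.nonneg
  hasFDerivWithinAt x hx := (h.hasFDerivWithinAt x (hts hx)).mono hts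
  abs_le x hx := h.abs_le x (hts hx)
  norm_le x hx := h.norm_le x (hts hx)
  norm_sub_le x hx y hy := h.norm_sub_le x (hts hx) y (hts hy)

theorem const_mul (h : HasC1HolderBound α s f f' C) (c : ℝ) :
    HasC1HolderBound α s (fun x => c * f x) (fun x => c • f' x) (|c| * C) where
  nonneg := mul_nonneg (abs_nonneg c) h.nonneg
  hasFDerivWithinAt x hx := (h.hasFDerivWithinAt x hx).const_mul c
  abs_le x hx := by rw [abs_mul]; gcongr; exact h.abs_le x hx
  norm_le x hx := by rw [norm_smul, Real.norm_eq_abs]; gcongr; exact h.norm_le x hx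
  norm_sub_le x hx y hy := by
    rw [show c • f' x - c • f' y = c • (f' x - f' y) from (smul_sub c _ _).symm, norm_smul,
      Real.norm_eq_abs, mul_assoc]
    gcongr
    exact h.norm_sub_le x hx y hy

theorem comp_continuousLinearMap (h : HasC1HolderBound α s f f' C) (hα : 0 ≤ α) {t : Set Y}
    (L : Y →L[ℝ] X) (hL : ‖L‖ ≤ 1) (hts : MapsTo L t s) :
    HasC1HolderBound α t (f ∘ L) (fun y => (f' (L y)).comp L) C where
  nonneg := h.nonneg
  hasFDerivWithinAt y hy :=
    show HasFDerivWithinAt (f ∘ L) ((f' (L y)).comp L) t y from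
      (h.hasFDerivWithinAt (L y) (hts hy)).comp y L.hasFDerivWithinAt hts
  abs_le y hy := h.abs_le (L y) (hts hy)
  norm_le y hy := by
    refine ((f' (L y)).opNorm_comp_le L).trans ?_
    simpa using mul_le_mul (h.norm_le (L y) (hts hy)) hL (norm_nonneg L) h.nonneg
  norm_sub_le y hy z hz := by
    have hdist : dist (L y) (L z) ≤ dist y z := by
      rw [dist_eq_norm, dist_eq_norm, ← map_sub]
      simpa using L.le_of_opNorm_le hL (y - z)
    rw [← ContinuousLinearMap.sub_comp]
    calc ‖(f' (L y) - f' (L z)).comp L‖ ≤ ‖f' (L y) - f' (L z)‖ * 1 :=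
          ((f' (L y) - f' (L z)).opNorm_comp_le L).trans (by gcongr)
      _ ≤ C * dist y z ^ α := by
          rw [mul_one]
          refine (h.norm_sub_le _ (hts hy) _ (hts hz)).trans ?_
          have := h.nonneg
          gcongr

theorem abs_sub_le (h : HasC1HolderBound α s f f' C) (hs : Convex ℝ s) {x y : X}
    (hx : x ∈ s) (hy : y ∈ s) : |f x - f y| ≤ C * dist x y := by
  rw [dist_eq_norm, ← Real.norm_eq_abs]
  exact hs.norm_image_sub_le_of_norm_hasFDerivWithin_le h.hasFDerivWithinAt h.norm_le hy hx

theorem norm_smul_sub_smul_le_mul_rpow (hf : HasC1HolderBound α s f f' C)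
    (hg : HasC1HolderBound α s g g' C') (hs : Convex ℝ s)
    (hdiam : ∀ x ∈ s, ∀ y ∈ s, dist x y ≤ 2) (hα : α ∈ Ioc 0 1) {x y : X}
    (hx : x ∈ s) (hy : y ∈ s) : ‖f x • g' x - f y • g' y‖ ≤ 3 * C * C' * dist x y ^ α := by
  have hC := hf.nonneg
  have hC' := hg.nonneg
  have hd : dist x y ≤ 2 * dist x y ^ α :=
    le_two_mul_rpow_of_le_two hα.1.le hα.2 dist_nonneg (hdiam x hx y hy)
  calc ‖f x • g' x - f y • g' y‖ ≤ |f x - f y| * ‖g' x‖ + |f y| * ‖g' x - g' y‖ :=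
        norm_smul_sub_smul_le _ _ _ _
    _ ≤ C * dist x y * C' + C * (C' * dist x y ^ α) := by
        gcongr
        exacts [hf.abs_sub_le hs hx hy, hg.norm_le x hx, hf.abs_le y hy, hg.norm_sub_le x hx y hy]
    _ ≤ C * (2 * dist x y ^ α) * C' + C * (C' * dist x y ^ α) := by gcongr
    _ = 3 * C * C' * dist x y ^ α := by ring

theorem mul (hf : HasC1HolderBound α s f f' C) (hg : HasC1HolderBound α s g g' C')
    (hs : Convex ℝ s) (hdiam : ∀ x ∈ s, ∀ y ∈ s, dist x y ≤ 2) (hα : α ∈ Ioc 0 1) :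
    HasC1HolderBound α s (fun x => f x * g x) (fun x => f x • g' x + g x • f' x)
      (6 * C * C') := by
  have hC := hf.nonneg
  have hC' := hg.nonneg
  refine ⟨by positivity, fun x hx => (hf.hasFDerivWithinAt x hx).mul (hg.hasFDerivWithinAt x hx),
    fun x hx => ?_, fun x hx => ?_, fun x hx y hy => ?_⟩
  · rw [abs_mul]
    nlinarith [hf.abs_le x hx, hg.abs_le x hx, abs_nonneg (f x), abs_nonneg (g x)]
  · refine (norm_add_le _ _).trans ?_
    rw [norm_smul, norm_smul, Real.norm_eq_abs, Real.norm_eq_abs]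
    nlinarith [hf.abs_le x hx, hg.abs_le x hx, hf.norm_le x hx, hg.norm_le x hx,
      abs_nonneg (f x), abs_nonneg (g x), norm_nonneg (f' x), norm_nonneg (g' x)]
  · rw [add_sub_add_comm]
    refine (norm_add_le _ _).trans ?_
    have h₁ := hf.norm_smul_sub_smul_le_mul_rpow hg hs hdiam hα hx hy
    have h₂ := hg.norm_smul_sub_smul_le_mul_rpow hf hs hdiam hα hx hy
    linarith

end HasC1HolderBound

namespace HasC1HolderBound

variable {α C : ℝ} {s : Set X} {f : X → ℝ} {f' : X → X →L[ℝ] ℝ}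

theorem norm_sub_sub_le (h : HasC1HolderBound α s f f' C) (hs : Convex ℝ s) (hα : 0 ≤ α)
    {x y : X} (hx : x ∈ s) (hy : y ∈ s) :
    ‖f y - f x - f' x (y - x)‖ ≤ C * dist x y ^ α * ‖y - x‖ := by
  have hseg : segment ℝ x y ⊆ s := hs.segment_subset hx hy
  have hderiv : ∀ z ∈ segment ℝ x y,
      HasFDerivWithinAt (fun z => f z - f' x z) (f' z - f' x) (segment ℝ x y) z := fun z hz =>
    ((h.hasFDerivWithinAt z (hseg hz)).mono hseg).sub (f' x).hasFDerivWithinAt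
  have hbound : ∀ z ∈ segment ℝ x y, ‖f' z - f' x‖ ≤ C * dist x y ^ α := by
    intro z hz
    refine (h.norm_sub_le z (hseg hz) x hx).trans ?_
    have := h.nonneg
    have : dist z x ≤ dist x y := by
      rw [dist_comm]; linarith [dist_add_dist_of_mem_segment hz, dist_nonneg (x := z) (y := y)]
    gcongr
  have := (convex_segment x y).norm_image_sub_le_of_norm_hasFDerivWithin_le hderiv hbound
    (left_mem_segment ℝ x y) (right_mem_segment ℝ x y)
  rwa [map_sub, show f y - f x - (f' x y - f' x x) = f y - f' x y - (f x - f' x x) by ring]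

end HasC1HolderBound

theorem hasFDerivWithinAt_of_norm_sub_sub_le {α K : ℝ} (hα : 0 < α) {s : Set X} {f : X → ℝ}
    {L : X →L[ℝ] ℝ} {x : X} (h : ∀ y ∈ s, ‖f y - f x - L (y - x)‖ ≤ K * dist x y ^ α * ‖y - x‖) :
    HasFDerivWithinAt f L s x := by
  have hbigO : (fun y => f y - f x - L (y - x)) =O[𝓝[s] x] fun y => dist x y ^ α * ‖y - x‖ :=
    Asymptotics.IsBigO.of_bound K <| eventually_nhdsWithin_of_forall fun y hy => by
      simpa only [norm_mul, norm_norm, Real.norm_of_nonneg (Real.rpow_nonneg dist_nonneg α),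
        mul_assoc] using h y hy
  have hsmall : (fun y => dist x y ^ α) =o[𝓝[s] x] fun _ => (1 : ℝ) := by
    refine (Asymptotics.isLittleO_one_iff ℝ).2 (tendsto_nhdsWithin_of_tendsto_nhds ?_)
    have : Continuous fun y => dist x y ^ α :=
      (continuous_const.dist continuous_id).rpow_const fun _ => Or.inr hα.le
    simpa [Real.zero_rpow hα.ne'] using this.tendsto x
  refine .of_isLittleO (hbigO.trans_isLittleO ?_)
  simpa using (hsmall.mul_isBigO (Asymptotics.isBigO_refl (fun y => ‖y - x‖) _)).norm_right

theorem hasC1HolderBound_of_hasSum {ι : Type*} {α : ℝ} (hα : 0 < α) {s : Set X}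
    (hs : Convex ℝ s) {F : ι → X → ℝ} {F' : ι → X → X →L[ℝ] ℝ} {u : ι → ℝ} (hu : Summable u)
    (hF : ∀ i, HasC1HolderBound α s (F i) (F' i) (u i)) {f : X → ℝ}
    (hf : ∀ x ∈ s, HasSum (fun i => F i x) (f x)) :
    HasC1HolderBound α s f (fun x => ∑' i, F' i x) (∑' i, u i) := by
  have hF' : ∀ x ∈ s, Summable fun i => F' i x := fun x hx =>
    .of_norm_bounded hu fun i => (hF i).norm_le x hx
  refine ⟨tsum_nonneg fun i => (hF i).nonneg, fun x hx => ?_, fun x hx => ?_,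
    fun x hx => tsum_of_norm_bounded hu.hasSum fun i => (hF i).norm_le x hx,
    fun x hx y hy => ?_⟩
  · refine hasFDerivWithinAt_of_norm_sub_sub_le (K := ∑' i, u i) hα fun y hy => ?_
    have hsum : HasSum (fun i => F i y - F i x - F' i x (y - x))
        (f y - f x - (∑' i, F' i x) (y - x)) := by
      refine ((hf y hy).sub (hf x hx)).sub ?_
      exact (ContinuousLinearMap.apply ℝ ℝ (y - x)).hasSum (hF' x hx).hasSum
    rw [← hsum.tsum_eq]
    exact tsum_of_norm_bounded (hu.hasSum.mul_right _ |>.mul_right _) fun i =>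
      (hF i).norm_sub_sub_le hs hα.le hx hy
  · rw [← Real.norm_eq_abs, ← (hf x hx).tsum_eq]
    exact tsum_of_norm_bounded hu.hasSum fun i => (hF i).abs_le x hx
  · rw [← ((hF' x hx).hasSum.sub (hF' y hy).hasSum).tsum_eq]
    exact tsum_of_norm_bounded (hu.hasSum.mul_right _) fun i => (hF i).norm_sub_le x hx y hy

theorem hasC1HolderBound_sub_pow {α r : ℝ} (hα : α ∈ Ioc 0 1) (hr : r ∈ Ioc 0 1) (c : ℝ)
    (j : ℕ) :
    HasC1HolderBound α (Icc (c - r) (c + r)) (fun t => (t - c) ^ j)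
      (fun t => (j * (t - c) ^ (j - 1)) • (1 : ℝ →L[ℝ] ℝ)) (2 * (j + 1) ^ 2 * (r ^ j / r ^ 2)) := by
  obtain ⟨hr₀, hr₁⟩ := hr
  set R := r ^ j / r ^ 2
  have hR : 0 ≤ R := by positivity
  have habs : ∀ t ∈ Icc (c - r) (c + r), |t - c| ≤ r := fun t ht =>
    abs_le.2 ⟨by linarith [ht.1], by linarith [ht.2]⟩
  have hpow : ∀ {a : ℝ}, 0 ≤ a → a ≤ r → ∀ {m : ℕ}, m ≤ 2 → a ^ (j - m) ≤ R := fun ha₀ ha m hm =>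
    (pow_le_pow_left₀ ha₀ ha _).trans (pow_sub_le_pow_div_sq hr₀ hr₁ hm j)
  have hj : (j : ℝ) * j ≤ (j + 1) ^ 2 := by nlinarith
  have hj' : (j : ℝ) ≤ (j + 1) ^ 2 := by nlinarith
  have hR' : R ≤ 2 * (j + 1) ^ 2 * R := le_mul_of_one_le_left hR (by nlinarith)
  refine ⟨by positivity, fun t _ => ?_, fun t ht => ?_, fun t ht => ?_, fun x hx y hy => ?_⟩
  · refine (((hasDerivAt_id' t).sub_const c).fun_pow j).hasFDerivAt.hasFDerivWithinAt
      |>.congr_fderiv ?_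
    ext
    simp
  · rw [abs_pow]
    exact (hpow (abs_nonneg _) (habs t ht) (m := 0) (by norm_num)).trans hR'
  · rw [norm_smul, norm_one, mul_one, Real.norm_eq_abs, abs_mul, abs_pow, Nat.abs_cast]
    have := hpow (abs_nonneg _) (habs t ht) (m := 1) (by norm_num)
    calc (j : ℝ) * |t - c| ^ (j - 1) ≤ (j + 1) ^ 2 * R := by gcongr
      _ ≤ 2 * (j + 1) ^ 2 * R := by nlinarith
  · have hd : dist x y ≤ 2 * dist x y ^ α := by
      refine le_two_mul_rpow_of_le_two hα.1.le hα.2 dist_nonneg ?_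
      rw [Real.dist_eq]
      linarith [abs_sub_le x c y, habs x hx, habs y hy, abs_sub_comm y c]
    have hmax : max |x - c| |y - c| ^ (j - 1 - 1) ≤ R := by
      rw [Nat.sub_sub]
      exact hpow ((abs_nonneg _).trans (le_max_left _ _)) (max_le (habs x hx) (habs y hy))
        (by norm_num)
    have hcast : ((j - 1 : ℕ) : ℝ) ≤ j := by exact_mod_cast Nat.sub_le j 1
    rw [← sub_smul, norm_smul, norm_one, mul_one, Real.norm_eq_abs, ← mul_sub, abs_mul,
      Nat.abs_cast]
    calc (j : ℝ) * |(x - c) ^ (j - 1) - (y - c) ^ (j - 1)|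
        ≤ j * (dist x y * j * R) := by
          gcongr
          refine (abs_pow_sub_pow_le _ _ _).trans ?_
          rw [sub_sub_sub_cancel_right, ← Real.dist_eq]
          gcongr
      _ ≤ j * (2 * dist x y ^ α * j * R) := by gcongr
      _ = 2 * (j * j) * R * dist x y ^ α := by ring
      _ ≤ 2 * (j + 1) ^ 2 * R * dist x y ^ α := by gcongr

theorem summable_succ_sq_mul_half_pow :
    Summable fun j : ℕ => ((j : ℝ) + 1) ^ 2 * (1 / 2 : ℝ) ^ j := by
  have := (summable_nat_add_iff 1).2
    (summable_pow_mul_geometric_of_norm_lt_one (R := ℝ) 2 (r := 1 / 2) (by norm_num))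
  refine (this.mul_left 2).congr fun j => ?_
  push_cast
  ring

theorem dist_le_two_of_mem_closedBall_prod_Icc {E : Type*} [NormedAddCommGroup E] {c r : ℝ}
    (hr : r ≤ 1) {x y : E × ℝ} (hx : x ∈ closedBall (0 : E) 1 ×ˢ Icc (c - r) (c + r))
    (hy : y ∈ closedBall (0 : E) 1 ×ˢ Icc (c - r) (c + r)) : dist x y ≤ 2 := by
  rw [Prod.dist_eq, Real.dist_eq]
  refine max_le ?_ (abs_sub_le_iff.2 ⟨?_, ?_⟩)
  · linarith [dist_triangle_right x.1 y.1 0, mem_closedBall.1 hx.1, mem_closedBall.1 hy.1]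
  all_goals linarith [hx.2.1, hx.2.2, hy.2.1, hy.2.2]

theorem HasC1HolderBound.const_mul_mul_sub_pow {E : Type*} [NormedAddCommGroup E]
    [NormedSpace ℝ E] {α N r : ℝ} (hα : α ∈ Ioc 0 1) (hr : r ∈ Ioc 0 1) {g : E → ℝ}
    {g' : E → E →L[ℝ] ℝ} (hg : HasC1HolderBound α (closedBall 0 1) g g' N) (e c : ℝ) (j : ℕ) :
    ∃ F', HasC1HolderBound α (closedBall (0 : E) 1 ×ˢ Icc (c - r) (c + r))
      (fun x => e * (g x.1 * (x.2 - c) ^ j)) F'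
      (|e| * (6 * N * (2 * (j + 1) ^ 2 * (r ^ j / r ^ 2)))) :=
  ⟨_, ((hg.comp_continuousLinearMap hα.1.le (.fst ℝ E ℝ)
    (ContinuousLinearMap.norm_fst_le ℝ E ℝ) fun _ hx => hx.1).mul
    ((hasC1HolderBound_sub_pow hα hr c j).comp_continuousLinearMap hα.1.le (.snd ℝ E ℝ)
      (ContinuousLinearMap.norm_snd_le ℝ E ℝ) fun _ hx => hx.2)
    ((convex_closedBall _ _).prod (convex_Icc _ _))
    (fun _ hx _ hy => dist_le_two_of_mem_closedBall_prod_Icc hr.2 hx hy) hα).const_mul e⟩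

def HasC1HolderBoundOnSlab {E : Type*} [NormedAddCommGroup E] [NormedSpace ℝ E] (α : ℝ)
    (A : ℝ → E → ℝ → ℝ) (y : ℝ × ℝ) (r C : ℝ) : Prop :=
  ∃ f', HasC1HolderBound α (closedBall (0 : E) 1 ×ˢ Icc (y.2 - r) (y.2 + r))
    (fun x => A y.1 x.1 x.2) f' C

theorem HasC1HolderBoundOnSlab.mono {E : Type*} [NormedAddCommGroup E] [NormedSpace ℝ E]
    {α r r' C C' ε ζ ζ' : ℝ} {A : ℝ → E → ℝ → ℝ} (h : HasC1HolderBoundOnSlab α A (ε, ζ) r C)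
    (hr : |ζ' - ζ| + r' ≤ r) (hC : C ≤ C') : HasC1HolderBoundOnSlab α A (ε, ζ') r' C' := by
  obtain ⟨f', hf'⟩ := h
  obtain ⟨h₁, h₂⟩ := abs_sub_le_iff.1 (le_refl |ζ' - ζ|)
  exact ⟨f', (hf'.mono (prod_mono subset_rfl
    (Icc_subset_Icc (by dsimp only; linarith) (by dsimp only; linarith)))).mono_const hC⟩

theorem exists_hasC1HolderBound_of_hasSum {E : Type*} [NormedAddCommGroup E] [NormedSpace ℝ E]
    {α M ρ εt ζt : ℝ} (hα : α ∈ Ioc 0 1) (hρ : ρ ∈ Ioo 0 1) {a : ℕ → ℕ → E → ℝ}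
    (hcoef : ∀ j k : ℕ, c1holderNormLE α (closedBall 0 1) (a j k) (M * (1 / ρ) ^ (j + k)))
    {A : ℝ → E → ℝ → ℝ}
    (hsum : ∀ ε ζ : ℝ, |ε - εt| < ρ → |ζ - ζt| < ρ → ∀ z ∈ closedBall (0 : E) 1,
      HasSum (fun p : ℕ × ℕ => a p.1 p.2 z * (ε - εt) ^ p.2 * (ζ - ζt) ^ p.1) (A ε z ζ)) :
    ∃ C, ∀ ε, |ε - εt| ≤ ρ / 2 → HasC1HolderBoundOnSlab α A (ε, ζt) (ρ / 2) C := by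
  obtain ⟨hρ₀, hρ₁⟩ := hρ
  set r := ρ / 2 with hr_def
  have hr : r ∈ Ioc 0 1 := ⟨by positivity, by linarith⟩
  have hM : 0 ≤ M := by simpa using (hcoef 0 0).hasC1HolderBound.nonneg
  have hrρ : r * (1 / ρ) = 1 / 2 := by rw [hr_def]; field_simp
  set u : ℕ × ℕ → ℝ := fun p => 12 * M / r ^ 2 * ((p.1 + 1) ^ 2 * (1 / 2) ^ p.1) * (1 / 2) ^ p.2
  have hu : Summable u :=
    (summable_succ_sq_mul_half_pow.mul_left _).mul_of_nonneg
      (summable_geometric_of_lt_one (by norm_num) (by norm_num))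
      (fun j => by positivity) (fun k => by positivity)
  refine ⟨∑' p, u p, fun ε hε => ?_⟩
  have hterm : ∀ p : ℕ × ℕ, ∃ F', HasC1HolderBound α (closedBall (0 : E) 1 ×ˢ Icc (ζt - r) (ζt + r))
      (fun x => (ε - εt) ^ p.2 * (a p.1 p.2 x.1 * (x.2 - ζt) ^ p.1)) F' (u p) := by
    rintro ⟨j, k⟩
    obtain ⟨F', hF'⟩ := (hcoef j k).hasC1HolderBound.const_mul_mul_sub_pow hα hr ((ε - εt) ^ k) ζt j
    refine ⟨F', hF'.mono_const ?_⟩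
    have hk : |(ε - εt) ^ k| * (1 / ρ) ^ k ≤ (1 / 2) ^ k := by
      rw [abs_pow, ← mul_pow, ← hrρ]
      gcongr
    calc |(ε - εt) ^ k| * (6 * (M * (1 / ρ) ^ (j + k)) * (2 * (j + 1) ^ 2 * (r ^ j / r ^ 2)))
        = 12 * M / r ^ 2 * ((j + 1) ^ 2 * (r * (1 / ρ)) ^ j) * (|(ε - εt) ^ k| * (1 / ρ) ^ k) := by
          rw [pow_add, mul_pow]; ring
      _ ≤ u (j, k) := by rw [hrρ]; exact mul_le_mul_of_nonneg_left hk (by positivity)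
  choose F' hF' using hterm
  refine ⟨_, hasC1HolderBound_of_hasSum hα.1 ((convex_closedBall _ _).prod (convex_Icc _ _)) hu hF'
    fun x hx => ?_⟩
  have hx₂ : |x.2 - ζt| < ρ := by
    rw [abs_sub_lt_iff]; constructor <;> linarith [hx.2.1, hx.2.2]
  convert hsum ε x.2 (by linarith) hx₂ x.1 hx.1 using 1
  funext p
  ring

theorem IsCompact.exists_forall_of_forall_mem_ball {Y : Type*} [PseudoMetricSpace Y] {K : Set Y}
    (hK : IsCompact K) {Q : Y → ℝ → ℝ → Prop}
    (hloc : ∀ w ∈ K, ∃ r > 0, ∃ C, ∀ y ∈ ball w r, Q y r C)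
    (hQ : ∀ y δ δ' C C', δ' ≤ δ → C ≤ C' → Q y δ C → Q y δ' C') :
    ∃ δ > 0, ∃ C > 0, ∀ y ∈ K, Q y δ C := by
  refine hK.induction_on ⟨1, one_pos, 1, one_pos, by simp⟩ ?_ ?_ fun w hw => ?_
  · rintro S T hST ⟨δ, hδ, C, hC, hT⟩
    exact ⟨δ, hδ, C, hC, fun y hy => hT y (hST hy)⟩
  · rintro S T ⟨δ, hδ, C, hC, hS⟩ ⟨δ', hδ', C', -, hT⟩
    refine ⟨min δ δ', lt_min hδ hδ', max C C', lt_max_of_lt_left hC, ?_⟩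
    rintro y (hy | hy)
    · exact hQ y _ _ _ _ (min_le_left _ _) (le_max_left _ _) (hS y hy)
    · exact hQ y _ _ _ _ (min_le_right _ _) (le_max_right _ _) (hT y hy)
  · obtain ⟨r, hr, C, h⟩ := hloc w hw
    exact ⟨ball w r, mem_nhdsWithin_of_mem_nhds (ball_mem_nhds w hr), r, hr, max C 1,
      by positivity, fun y hy => hQ y _ _ _ _ le_rfl (le_max_left _ _) (h y hy)⟩

theorem c1holderNormLE_of_forall_hasC1HolderBound {α δ C : ℝ} {s : Set X} {f : X → ℝ}
    (hs : UniqueDiffOn ℝ s) (hα : 0 ≤ α) (hδ : 0 < δ) (hC : 0 ≤ C)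
    (hloc : ∀ x ∈ s, ∃ t f', s ∩ ball x δ ⊆ t ∧ HasC1HolderBound α t f f' C) :
    c1holderNormLE α s f (C + C + (C + 2 * C / (δ / 2) ^ α)) := by
  choose! t F' hts hF using hloc
  have hmem : ∀ x ∈ s, ∀ y ∈ s, dist y x < δ → y ∈ t x := fun x hx y hy hyx =>
    hts x hx ⟨hy, mem_ball.2 hyx⟩
  have hderiv : ∀ x ∈ s, ∀ y ∈ s, dist y x < δ / 2 → HasFDerivWithinAt f (F' x y) s y := by
    intro x hx y hy hyx
    have hsub : s ∩ ball y (δ / 2) ⊆ t x := fun z hz =>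
      hmem x hx z hz.1 <| (dist_triangle z y x).trans_lt (by linarith [mem_ball.1 hz.2])
    exact ((hF x hx).hasFDerivWithinAt y (hmem x hx y hy (by linarith))).mono_of_mem_nhdsWithin
      (mem_of_superset (inter_mem_nhdsWithin s (ball_mem_nhds y (half_pos hδ))) hsub)
  have hfderiv : ∀ x ∈ s, ∀ y ∈ s, dist y x < δ / 2 → fderivWithin ℝ f s y = F' x y :=
    fun x hx y hy hyx => (hderiv x hx y hy hyx).fderivWithin (hs y hy)
  have hself : ∀ x ∈ s, dist x x < δ / 2 := fun x _ => by simpa using half_pos hδ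
  have hnorm : ∀ x ∈ s, ‖fderivWithin ℝ f s x‖ ≤ C := fun x hx => by
    rw [hfderiv x hx x hx (hself x hx)]
    exact (hF x hx).norm_le x (hmem x hx x hx (by simpa using hδ))
  refine ⟨fun x hx => (hderiv x hx x hx (hself x hx)).differentiableWithinAt, C, C, _, hC, hC,
    by positivity, fun x hx => (hF x hx).abs_le x (hmem x hx x hx (by simpa using hδ)), hnorm,
    fun x hx y hy => ?_, le_rfl⟩
  have hδα : 0 < (δ / 2) ^ α := by positivity
  rcases lt_or_ge (dist y x) (δ / 2) with hyx | hyx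
  · rw [hfderiv x hx x hx (hself x hx), hfderiv x hx y hy hyx]
    refine ((hF x hx).norm_sub_le x (hmem x hx x hx (by simpa using hδ)) y
      (hmem x hx y hy (by linarith))).trans ?_
    gcongr
    exact le_add_of_nonneg_right (by positivity)
  · calc ‖fderivWithin ℝ f s x - fderivWithin ℝ f s y‖ ≤ C + C :=
          norm_sub_le_of_le (hnorm x hx) (hnorm y hy)
      _ = 2 * C / (δ / 2) ^ α * (δ / 2) ^ α := by field_simp; ring
      _ ≤ 2 * C / (δ / 2) ^ α * dist x y ^ α := by rw [dist_comm] at hyx; gcongr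
      _ ≤ (C + 2 * C / (δ / 2) ^ α) * dist x y ^ α := by gcongr; exact le_add_of_nonneg_left hC

theorem exists_forall_mem_ball_hasC1HolderBoundOnSlab {E : Type*} [NormedAddCommGroup E]
    [NormedSpace ℝ E] {α M ρ εt ζt : ℝ} (hα : α ∈ Ioc 0 1) (hρ : ρ ∈ Ioo 0 1)
    {a : ℕ → ℕ → E → ℝ}
    (hcoef : ∀ j k : ℕ, c1holderNormLE α (closedBall 0 1) (a j k) (M * (1 / ρ) ^ (j + k)))
    {A : ℝ → E → ℝ → ℝ}
    (hsum : ∀ ε ζ : ℝ, |ε - εt| < ρ → |ζ - ζt| < ρ → ∀ z ∈ closedBall (0 : E) 1,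
      HasSum (fun p : ℕ × ℕ => a p.1 p.2 z * (ε - εt) ^ p.2 * (ζ - ζt) ^ p.1) (A ε z ζ)) :
    ∃ r > 0, ∃ C, ∀ y ∈ ball (εt, ζt) r, HasC1HolderBoundOnSlab α A y r C := by
  obtain ⟨C, hC⟩ := exists_hasC1HolderBound_of_hasSum hα hρ hcoef hsum
  refine ⟨ρ / 4, by linarith [hρ.1], C, fun y hy => ?_⟩
  simp only [mem_ball, Prod.dist_eq, max_lt_iff, Real.dist_eq] at hy
  exact (hC y.1 (by linarith [hy.1, hρ.1])).mono (by linarith [hy.2]) le_rfl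

theorem c1holderNormLE_of_forall_hasC1HolderBoundOnSlab {E : Type*} [NormedAddCommGroup E]
    [NormedSpace ℝ E] {α δ C p q ε : ℝ} {A : ℝ → E → ℝ → ℝ} (hpq : p < q) (hα : 0 ≤ α)
    (hδ : 0 < δ) (hC : 0 ≤ C) (h : ∀ ζ ∈ Icc p q, HasC1HolderBoundOnSlab α A (ε, ζ) δ C) :
    c1holderNormLE α (closedBall (0 : E) 1 ×ˢ Icc p q) (fun x => A ε x.1 x.2)
      (C + C + (C + 2 * C / (δ / 2) ^ α)) := by
  have hB : UniqueDiffOn ℝ (closedBall (0 : E) 1) := uniqueDiffOn_convex (convex_closedBall _ _)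
    ((nonempty_ball.2 one_pos).mono ball_subset_interior_closedBall)
  refine c1holderNormLE_of_forall_hasC1HolderBound (hB.prod (uniqueDiffOn_Icc hpq)) hα hδ hC
    fun x hx => ?_
  obtain ⟨f', hf'⟩ := h x.2 hx.2
  refine ⟨closedBall 0 1 ×ˢ Icc (x.2 - δ) (x.2 + δ), f', fun y hy => ⟨hy.1.1, ?_⟩, hf'⟩
  have := mem_ball.1 hy.2
  rw [Prod.dist_eq, max_lt_iff, Real.dist_eq, abs_sub_lt_iff] at this
  constructor <;> linarith [this.2]

theorem stmt_9_general (n : ℕ) (ε₀ α : ℝ) (hα : α ∈ Set.Ioo (0 : ℝ) 1)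
    (A : ℝ → EuclideanSpace ℝ (Fin (n - 1)) → ℝ → ℝ)
    -- real analyticity of `(ε,ζ) ↦ A(ε,·,ζ)` into `C^{1,α}(closure B_{n-1}(0,1))`:
    -- local power series expansions with geometric `C^{1,α}` bounds on the coefficients
    (hA : ∀ εt ∈ Set.Ioo (-ε₀) ε₀, ∀ ζt : ℝ, ∃ M > (0 : ℝ), ∃ ρ ∈ Set.Ioo (0 : ℝ) 1,
      ∃ a : ℕ → ℕ → (EuclideanSpace ℝ (Fin (n - 1)) → ℝ),
        (∀ j k : ℕ, c1holderNormLE α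
          (Metric.closedBall (0 : EuclideanSpace ℝ (Fin (n - 1))) 1)
          (a j k) (M * (1 / ρ) ^ (j + k))) ∧
        ∀ ε ζ : ℝ, |ε - εt| < ρ → |ζ - ζt| < ρ →
          ∀ z ∈ Metric.closedBall (0 : EuclideanSpace ℝ (Fin (n - 1))) 1,
            HasSum (fun p : ℕ × ℕ => a p.1 p.2 z * (ε - εt) ^ p.2 * (ζ - ζt) ^ p.1) (A ε z ζ))
    (p q : ℝ) (hpq : p < q) (K : Set ℝ) (hK : IsCompact K) (hKsub : K ⊆ Set.Ioo (-ε₀) ε₀) :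
    ∃ C > (0 : ℝ), ∀ ε ∈ K,
      c1holderNormLE α
        ((Metric.closedBall (0 : EuclideanSpace ℝ (Fin (n - 1))) 1) ×ˢ Set.Icc p q)
        (fun x => A ε x.1 x.2) C := by
  have hloc : ∀ w ∈ K ×ˢ Icc p q, ∃ r > 0, ∃ C, ∀ y ∈ ball w r,
      HasC1HolderBoundOnSlab α A y r C := fun w hw => by
    obtain ⟨M, -, ρ, hρ, a, hcoef, hsum⟩ := hA w.1 (hKsub hw.1) w.2
    exact exists_forall_mem_ball_hasC1HolderBoundOnSlab ⟨hα.1, hα.2.le⟩ hρ hcoef hsum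
  obtain ⟨δ, hδ, C, hC, hslab⟩ := (hK.prod isCompact_Icc).exists_forall_of_forall_mem_ball hloc
    fun y δ δ' C C' hδ' hC' h => h.mono (by rw [sub_self, abs_zero, zero_add]; exact hδ') hC'
  exact ⟨_, by positivity, fun ε hε => c1holderNormLE_of_forall_hasC1HolderBoundOnSlab hpq
    hα.1.le hδ hC.le fun ζ hζ => hslab (ε, ζ) ⟨hε, hζ⟩⟩

theorem stmt_9 (n : ℕ) (hn : 2 ≤ n) (ε₀ α : ℝ) (hε₀ : 0 < ε₀) (hα : α ∈ Set.Ioo (0 : ℝ) 1)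
    (A : ℝ → EuclideanSpace ℝ (Fin (n - 1)) → ℝ → ℝ)
    -- real analyticity of `(ε,ζ) ↦ A(ε,·,ζ)` into `C^{1,α}(closure B_{n-1}(0,1))`:
    -- local power series expansions with geometric `C^{1,α}` bounds on the coefficients
    (hA : ∀ εt ∈ Set.Ioo (-ε₀) ε₀, ∀ ζt : ℝ, ∃ M > (0 : ℝ), ∃ ρ ∈ Set.Ioo (0 : ℝ) 1,
      ∃ a : ℕ → ℕ → (EuclideanSpace ℝ (Fin (n - 1)) → ℝ),
        (∀ j k : ℕ, c1holderNormLE α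
          (Metric.closedBall (0 : EuclideanSpace ℝ (Fin (n - 1))) 1)
          (a j k) (M * (1 / ρ) ^ (j + k))) ∧
        ∀ ε ζ : ℝ, |ε - εt| < ρ → |ζ - ζt| < ρ →
          ∀ z ∈ Metric.closedBall (0 : EuclideanSpace ℝ (Fin (n - 1))) 1,
            HasSum (fun p : ℕ × ℕ => a p.1 p.2 z * (ε - εt) ^ p.2 * (ζ - ζt) ^ p.1) (A ε z ζ))
    (p q : ℝ) (hpq : p < q) (K : Set ℝ) (hK : IsCompact K) (hKsub : K ⊆ Set.Ioo (-ε₀) ε₀) :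
    ∃ C > (0 : ℝ), ∀ ε ∈ K,
      c1holderNormLE α
        ((Metric.closedBall (0 : EuclideanSpace ℝ (Fin (n - 1))) 1) ×ˢ Set.Icc p q)
        (fun x => A ε x.1 x.2) C :=
  stmt_9_general n ε₀ α hα A hA p q hpq K hK hKsub
end

section
/- Let Ω be a bounded open connected subset of ℝⁿ of class C^{1,α} and R > 0. There exists c₁ > 0 such that for all u ∈ C^{1,α}(∂Ω × ℝ) and all v ∈ C^{1,α}(∂Ω) with v(∂Ω) ⊆ [-R,R], the function t ↦ u(t, v(t)) belongs to C^{1,α}(∂Ω) and ‖u(·,v(·))‖_{C^{1,α}(∂Ω)} ≤ c₁ ‖u‖_{C^{1,α}(∂Ω×[-R,R])} (1 + ‖v‖_{C^{1,α}(∂Ω)})². -/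
/-!
In a chart the composite is `w ∘ ψ` with `ψ p = (p, φ p)` the graph map, whose differential is
`Dw (ψ p) ∘ (id, Dφ p)`, of norm at most `‖Dw‖ (1 + ‖Dφ‖)`. On the convex chart domain the mean
value inequality makes `ψ` Lipschitz with constant `1 + sup ‖Dφ‖`, so the Hölder seminorm of
the product of the two factors is at most `[Dw]_α (1 + sup ‖Dφ‖)^(1+α) + sup ‖Dw‖ [Dφ]_α`,
and `α ≤ 1` turns the exponent into `2`. Summing over the finitely many charts gives `c₁ = 2`.
-/

/-- Sup norm of a function over a set. -/
noncomputable def sNorm {X : Type*} [PseudoMetricSpace X] {F : Type*} [NormedAddCommGroup F]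
    (s : Set X) (g : X → F) : ℝ :=
  sSup ((fun x => ‖g x‖) '' s)

/-- Hölder seminorm of exponent `a` of a function over a set. -/
noncomputable def hSemi {X : Type*} [PseudoMetricSpace X] {F : Type*} [NormedAddCommGroup F]
    (a : ℝ) (s : Set X) (g : X → F) : ℝ :=
  sSup {c | ∃ x ∈ s, ∃ y ∈ s, x ≠ y ∧ c = ‖g x - g y‖ / dist x y ^ a}

/-- The `C^{1,α}` norm on a set `s`. -/
noncomputable def c1Norm {X : Type*} [NormedAddCommGroup X] [NormedSpace ℝ X]
    (a : ℝ) (s : Set X) (f : X → ℝ) : ℝ :=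
  sNorm s f + sNorm s (fderivWithin ℝ f s) + hSemi a s (fderivWithin ℝ f s)

/-- Membership in `C^{1,α}` on a set: differentiability together with an `α`-Hölder bound
on the differential within the set. -/
def memC1aOn {X : Type*} [NormedAddCommGroup X] [NormedSpace ℝ X]
    {F : Type*} [NormedAddCommGroup F] [NormedSpace ℝ F]
    (a : ℝ) (s : Set X) (g : X → F) : Prop :=
  DifferentiableOn ℝ g s ∧ ∃ C ≥ (0 : ℝ), ∀ x ∈ s, ∀ y ∈ s,
    ‖fderivWithin ℝ g s x - fderivWithin ℝ g s y‖ ≤ C * dist x y ^ a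

open Set Metric

section Seminorms

variable {X : Type*} [PseudoMetricSpace X] {F : Type*} [NormedAddCommGroup F]
  {a C : ℝ} {s : Set X} {g : X → F} {x y : X}

lemma sNorm_nonneg : 0 ≤ sNorm s g :=
  Real.sSup_nonneg (by rintro _ ⟨x, _, rfl⟩; exact norm_nonneg _)

lemma sNorm_le (hC : 0 ≤ C) (h : ∀ x ∈ s, ‖g x‖ ≤ C) : sNorm s g ≤ C :=
  Real.sSup_le (by rintro _ ⟨x, hx, rfl⟩; exact h x hx) hC

lemma norm_le_sNorm (h : BddAbove ((fun x => ‖g x‖) '' s)) (hx : x ∈ s) :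
    ‖g x‖ ≤ sNorm s g :=
  le_csSup h ⟨x, hx, rfl⟩

lemma bddAbove_norm_image_of_holder (hs : Bornology.IsBounded s) (ha : 0 ≤ a) (hC : 0 ≤ C)
    (h : ∀ x ∈ s, ∀ y ∈ s, ‖g x - g y‖ ≤ C * dist x y ^ a) :
    BddAbove ((fun x => ‖g x‖) '' s) := by
  rcases s.eq_empty_or_nonempty with rfl | ⟨x₀, hx₀⟩
  · simp
  refine ⟨‖g x₀‖ + C * diam s ^ a, ?_⟩
  rintro _ ⟨x, hx, rfl⟩
  have hdist : dist x x₀ ^ a ≤ diam s ^ a :=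
    Real.rpow_le_rpow dist_nonneg (dist_le_diam_of_mem hs hx hx₀) ha
  calc ‖g x‖ ≤ ‖g x₀‖ + ‖g x - g x₀‖ := norm_le_insert' _ _
    _ ≤ ‖g x₀‖ + C * diam s ^ a := by gcongr; exact (h x hx x₀ hx₀).trans (by gcongr)

end Seminorms

section HolderSeminorm

variable {X : Type*} [MetricSpace X] {F : Type*} [NormedAddCommGroup F]
  {a C : ℝ} {s : Set X} {g : X → F}

lemma hSemi_nonneg : 0 ≤ hSemi a s g := by
  refine Real.sSup_nonneg ?_
  rintro _ ⟨x, _, y, _, _, rfl⟩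
  have : 0 ≤ dist x y ^ a := Real.rpow_nonneg dist_nonneg a
  positivity

lemma hSemi_le (hC : 0 ≤ C) (h : ∀ x ∈ s, ∀ y ∈ s, ‖g x - g y‖ ≤ C * dist x y ^ a) :
    hSemi a s g ≤ C := by
  refine Real.sSup_le ?_ hC
  rintro _ ⟨x, hx, y, hy, hxy, rfl⟩
  rw [div_le_iff₀ (Real.rpow_pos_of_pos (dist_pos.2 hxy) a)]
  exact h x hx y hy

lemma norm_sub_le_hSemi_mul (h : ∀ x ∈ s, ∀ y ∈ s, ‖g x - g y‖ ≤ C * dist x y ^ a)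
    {x y : X} (hx : x ∈ s) (hy : y ∈ s) :
    ‖g x - g y‖ ≤ hSemi a s g * dist x y ^ a := by
  rcases eq_or_ne x y with rfl | hxy
  · rw [sub_self, norm_zero]
    exact mul_nonneg hSemi_nonneg (Real.rpow_nonneg dist_nonneg a)
  have hd : 0 < dist x y ^ a := Real.rpow_pos_of_pos (dist_pos.2 hxy) a
  have hbdd : BddAbove {c | ∃ x ∈ s, ∃ y ∈ s, x ≠ y ∧ c = ‖g x - g y‖ / dist x y ^ a} := by
    refine ⟨C, ?_⟩
    rintro _ ⟨x', hx', y', hy', hxy', rfl⟩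
    rw [div_le_iff₀ (Real.rpow_pos_of_pos (dist_pos.2 hxy') a)]
    exact h x' hx' y' hy'
  rw [← div_le_iff₀ hd]
  exact le_csSup hbdd ⟨x, hx, y, hy, hxy, rfl⟩

end HolderSeminorm

lemma c1Norm_nonneg {X : Type*} [NormedAddCommGroup X] [NormedSpace ℝ X]
    {a : ℝ} {s : Set X} {f : X → ℝ} : 0 ≤ c1Norm a s f :=
  add_nonneg (add_nonneg sNorm_nonneg sNorm_nonneg) (hSemi_nonneg (X := X))

namespace memC1aOn

variable {X : Type*} [NormedAddCommGroup X] [NormedSpace ℝ X]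
  {F : Type*} [NormedAddCommGroup F] [NormedSpace ℝ F] {a : ℝ} {s : Set X} {g : X → F} {x y : X}

lemma norm_fderivWithin_le_sNorm (hg : memC1aOn a s g) (hs : Bornology.IsBounded s)
    (ha : 0 ≤ a) (hx : x ∈ s) :
    ‖fderivWithin ℝ g s x‖ ≤ sNorm s (fderivWithin ℝ g s) :=
  let ⟨_, _, hC, h⟩ := hg
  norm_le_sNorm (bddAbove_norm_image_of_holder hs ha hC h) hx

lemma norm_fderivWithin_sub_le (hg : memC1aOn a s g) (hx : x ∈ s) (hy : y ∈ s) :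
    ‖fderivWithin ℝ g s x - fderivWithin ℝ g s y‖
      ≤ hSemi a s (fderivWithin ℝ g s) * dist x y ^ a :=
  let ⟨_, _, _, h⟩ := hg
  norm_sub_le_hSemi_mul h hx hy

end memC1aOn

lemma Real.rpow_mul_le_mul_rpow {a c d : ℝ} (ha : a ≤ 1) (hc : 1 ≤ c)
    (hd : 0 ≤ d) : (c * d) ^ a ≤ c * d ^ a := by
  rw [Real.mul_rpow (by linarith) hd]
  gcongr
  simpa using Real.rpow_le_rpow_of_exponent_le hc ha

lemma ContinuousLinearMap.norm_comp_sub_comp_le {𝕜 E F G : Type*} [NontriviallyNormedField 𝕜]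
    [NormedAddCommGroup E] [NormedSpace 𝕜 E] [NormedAddCommGroup F] [NormedSpace 𝕜 F]
    [NormedAddCommGroup G] [NormedSpace 𝕜 G] (f f' : F →L[𝕜] G) (g g' : E →L[𝕜] F) :
    ‖f.comp g - f'.comp g'‖ ≤ ‖f - f'‖ * ‖g‖ + ‖f'‖ * ‖g - g'‖ := by
  have : f.comp g - f'.comp g' = (f - f').comp g + f'.comp (g - g') := by
    ext; simp
  rw [this]
  exact (norm_add_le _ _).trans (add_le_add (opNorm_comp_le _ _) (opNorm_comp_le _ _))

section Graph

variable {E : Type*} [NormedAddCommGroup E] [NormedSpace ℝ E]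
  {F : Type*} [NormedAddCommGroup F] [NormedSpace ℝ F]
  {s : Set E} {φ : E → F} {M : ℝ} {p q : E}

lemma norm_id_prod_le (L : E →L[ℝ] F) : ‖(ContinuousLinearMap.id ℝ E).prod L‖ ≤ 1 + ‖L‖ := by
  rw [ContinuousLinearMap.opNorm_prod, Prod.norm_def]
  exact max_le (by linarith [ContinuousLinearMap.norm_id_le (𝕜 := ℝ) (E := E), norm_nonneg L])
    (by linarith)

lemma norm_id_prod_sub_id_prod (L L' : E →L[ℝ] F) :
    ‖(ContinuousLinearMap.id ℝ E).prod L - (ContinuousLinearMap.id ℝ E).prod L'‖ = ‖L - L'‖ := by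
  have : (ContinuousLinearMap.id ℝ E).prod L - (ContinuousLinearMap.id ℝ E).prod L'
      = (0 : E →L[ℝ] E).prod (L - L') := by
    ext <;> simp
  rw [this, ContinuousLinearMap.opNorm_prod, Prod.norm_def, norm_zero,
    max_eq_right (norm_nonneg _)]

lemma Convex.dist_graph_le (hs : Convex ℝ s) (hφ : DifferentiableOn ℝ φ s)
    (hM : ∀ x ∈ s, ‖fderivWithin ℝ φ s x‖ ≤ M) (hp : p ∈ s) (hq : q ∈ s) :
    dist (p, φ p) (q, φ q) ≤ (1 + M) * dist p q := by
  have hM₀ : 0 ≤ M := (norm_nonneg _).trans (hM p hp)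
  have hφpq : dist (φ p) (φ q) ≤ M * dist p q := by
    simpa only [dist_eq_norm] using hs.norm_image_sub_le_of_norm_fderivWithin_le hφ hM hq hp
  rw [Prod.dist_eq]
  exact max_le (by nlinarith [dist_nonneg (x := p) (y := q)])
    (by nlinarith [dist_nonneg (x := p) (y := q)])

end Graph

section CompGraph

variable {E : Type*} [NormedAddCommGroup E] [NormedSpace ℝ E]
  {F : Type*} [NormedAddCommGroup F] [NormedSpace ℝ F]
  {G : Type*} [NormedAddCommGroup G] [NormedSpace ℝ G]
  {a : ℝ} {s : Set E} {S : Set (E × F)} {w : E × F → G} {φ : E → F} {p q : E}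

lemma hasFDerivWithinAt_comp_graph (hw : DifferentiableOn ℝ w S) (hφ : DifferentiableOn ℝ φ s)
    (hmaps : MapsTo (fun p => (p, φ p)) s S) (hp : p ∈ s) :
    HasFDerivWithinAt (fun p => w (p, φ p))
      ((fderivWithin ℝ w S (p, φ p)).comp
        ((ContinuousLinearMap.id ℝ E).prod (fderivWithin ℝ φ s p))) s p :=
  (hw _ (hmaps hp)).hasFDerivWithinAt.comp p
    ((hasFDerivWithinAt_id p s).prodMk (hφ p hp).hasFDerivWithinAt) hmaps

lemma norm_fderivWithin_comp_graph_sub_le (ha₀ : 0 ≤ a) (ha₁ : a ≤ 1) (hs : Convex ℝ s)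
    (hsu : UniqueDiffOn ℝ s) (hsb : Bornology.IsBounded s) (hSb : Bornology.IsBounded S)
    (hw : memC1aOn a S w) (hφ : memC1aOn a s φ) (hmaps : MapsTo (fun p => (p, φ p)) s S)
    (hp : p ∈ s) (hq : q ∈ s) :
    ‖fderivWithin ℝ (fun p => w (p, φ p)) s p - fderivWithin ℝ (fun p => w (p, φ p)) s q‖
      ≤ (hSemi a S (fderivWithin ℝ w S) * (1 + sNorm s (fderivWithin ℝ φ s)) ^ 2
          + sNorm S (fderivWithin ℝ w S) * hSemi a s (fderivWithin ℝ φ s)) * dist p q ^ a := by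
  set Dw := fderivWithin ℝ w S
  set Dφ := fderivWithin ℝ φ s
  set M := sNorm s Dφ
  have hDφ : ∀ x ∈ s, ‖Dφ x‖ ≤ M := fun x hx => hφ.norm_fderivWithin_le_sNorm hsb ha₀ hx
  have hM : 0 ≤ M := sNorm_nonneg
  have hgraph : dist (p, φ p) (q, φ q) ^ a ≤ (1 + M) * dist p q ^ a :=
    calc dist (p, φ p) (q, φ q) ^ a ≤ ((1 + M) * dist p q) ^ a :=
          Real.rpow_le_rpow dist_nonneg (hs.dist_graph_le hφ.1 hDφ hp hq) ha₀
      _ ≤ (1 + M) * dist p q ^ a := Real.rpow_mul_le_mul_rpow ha₁ (by linarith) dist_nonneg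
  have hN₃ : 0 ≤ hSemi a S Dw := hSemi_nonneg
  rw [(hasFDerivWithinAt_comp_graph hw.1 hφ.1 hmaps hp).fderivWithin (hsu p hp),
    (hasFDerivWithinAt_comp_graph hw.1 hφ.1 hmaps hq).fderivWithin (hsu q hq)]
  refine (ContinuousLinearMap.norm_comp_sub_comp_le _ _ _ _).trans ?_
  rw [norm_id_prod_sub_id_prod]
  calc ‖Dw (p, φ p) - Dw (q, φ q)‖ * ‖(ContinuousLinearMap.id ℝ E).prod (Dφ p)‖
        + ‖Dw (q, φ q)‖ * ‖Dφ p - Dφ q‖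
      ≤ (hSemi a S Dw * ((1 + M) * dist p q ^ a)) * (1 + M)
        + sNorm S Dw * (hSemi a s Dφ * dist p q ^ a) := by
        refine add_le_add (mul_le_mul ?_ ?_ (norm_nonneg _) (by positivity))
          (mul_le_mul (hw.norm_fderivWithin_le_sNorm hSb ha₀ (hmaps hq))
            (hφ.norm_fderivWithin_sub_le hp hq) (norm_nonneg _) sNorm_nonneg)
        · exact (hw.norm_fderivWithin_sub_le (hmaps hp) (hmaps hq)).trans
            (mul_le_mul_of_nonneg_left hgraph hN₃)
        · exact (norm_id_prod_le _).trans (by linarith [hDφ p hp])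
    _ = _ := by ring

lemma memC1aOn.comp_graph (ha₀ : 0 ≤ a) (ha₁ : a ≤ 1) (hs : Convex ℝ s)
    (hsu : UniqueDiffOn ℝ s) (hsb : Bornology.IsBounded s) (hSb : Bornology.IsBounded S)
    (hw : memC1aOn a S w) (hφ : memC1aOn a s φ) (hmaps : MapsTo (fun p => (p, φ p)) s S) :
    memC1aOn a s (fun p => w (p, φ p)) :=
  ⟨fun _ hp => (hasFDerivWithinAt_comp_graph hw.1 hφ.1 hmaps hp).differentiableWithinAt, _,
    add_nonneg (mul_nonneg hSemi_nonneg (sq_nonneg _)) (mul_nonneg sNorm_nonneg hSemi_nonneg),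
    fun _ hp _ hq =>
      norm_fderivWithin_comp_graph_sub_le ha₀ ha₁ hs hsu hsb hSb hw hφ hmaps hp hq⟩

end CompGraph

lemma c1Norm_comp_graph_le {E : Type*} [NormedAddCommGroup E] [NormedSpace ℝ E]
    {a : ℝ} {s : Set E} {S : Set (E × ℝ)} {w : E × ℝ → ℝ} {φ : E → ℝ}
    (ha₀ : 0 ≤ a) (ha₁ : a ≤ 1) (hs : Convex ℝ s)
    (hsu : UniqueDiffOn ℝ s) (hsb : Bornology.IsBounded s) (hS : IsCompact S)
    (hw : memC1aOn a S w) (hφ : memC1aOn a s φ) (hmaps : MapsTo (fun p => (p, φ p)) s S) :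
    c1Norm a s (fun p => w (p, φ p)) ≤ 2 * c1Norm a S w * (1 + c1Norm a s φ) ^ 2 := by
  set N₁ := sNorm S w
  set N₂ := sNorm S (fderivWithin ℝ w S)
  set N₃ := hSemi a S (fderivWithin ℝ w S)
  set M₁ := sNorm s φ
  set M₂ := sNorm s (fderivWithin ℝ φ s)
  set M₃ := hSemi a s (fderivWithin ℝ φ s)
  have hN₁ : 0 ≤ N₁ := sNorm_nonneg
  have hN₂ : 0 ≤ N₂ := sNorm_nonneg
  have hN₃ : 0 ≤ N₃ := hSemi_nonneg
  have hM₁ : 0 ≤ M₁ := sNorm_nonneg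
  have hM₂ : 0 ≤ M₂ := sNorm_nonneg
  have hM₃ : 0 ≤ M₃ := hSemi_nonneg
  have hsup : sNorm s (fun p => w (p, φ p)) ≤ N₁ :=
    sNorm_le sNorm_nonneg fun p hp => norm_le_sNorm
      (hS.bddAbove_image (continuous_norm.comp_continuousOn hw.1.continuousOn)) (hmaps hp)
  have hsup_deriv : sNorm s (fderivWithin ℝ (fun p => w (p, φ p)) s) ≤ N₂ * (1 + M₂) := by
    refine sNorm_le (by positivity) fun p hp => ?_
    rw [(hasFDerivWithinAt_comp_graph hw.1 hφ.1 hmaps hp).fderivWithin (hsu p hp)]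
    exact (ContinuousLinearMap.opNorm_comp_le _ _).trans <| mul_le_mul
      (hw.norm_fderivWithin_le_sNorm hS.isBounded ha₀ (hmaps hp))
      ((norm_id_prod_le _).trans (by linarith [hφ.norm_fderivWithin_le_sNorm hsb ha₀ hp]))
      (norm_nonneg _) sNorm_nonneg
  have hholder : hSemi a s (fderivWithin ℝ (fun p => w (p, φ p)) s)
      ≤ N₃ * (1 + M₂) ^ 2 + N₂ * M₃ :=
    hSemi_le (by positivity) fun _ hp _ hq =>
        norm_fderivWithin_comp_graph_sub_le ha₀ ha₁ hs hsu hsb hS.isBounded hw hφ hmaps hp hq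
  set T := 1 + (M₁ + M₂ + M₃)
  have hT : 1 ≤ T := by linarith
  have hT₂ : 1 + M₂ ≤ T := by linarith
  have hTT : T ≤ T ^ 2 := by nlinarith
  calc c1Norm a s (fun p => w (p, φ p))
      ≤ N₁ + N₂ * (1 + M₂) + (N₃ * (1 + M₂) ^ 2 + N₂ * M₃) :=
        add_le_add (add_le_add hsup hsup_deriv) hholder
    _ ≤ N₁ * T ^ 2 + N₂ * T ^ 2 + (N₃ * T ^ 2 + N₂ * T ^ 2) := by
        gcongr
        · nlinarith
        · linarith
        · linarith
    _ ≤ 2 * (N₁ + N₂ + N₃) * T ^ 2 := by nlinarith [sq_nonneg T]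

lemma Finset.sum_le_mul_sum_mul_one_add_sum_sq {ι : Type*} (t : Finset ι) {f N M : ι → ℝ}
    {c : ℝ} (hc : 0 ≤ c) (hN : ∀ i ∈ t, 0 ≤ N i) (hM : ∀ i ∈ t, 0 ≤ M i)
    (h : ∀ i ∈ t, f i ≤ c * N i * (1 + M i) ^ 2) :
    ∑ i ∈ t, f i ≤ c * (∑ i ∈ t, N i) * (1 + ∑ i ∈ t, M i) ^ 2 := by
  rw [mul_sum, sum_mul]
  refine sum_le_sum fun i hi => (h i hi).trans ?_
  have hMi : M i ≤ ∑ j ∈ t, M j := single_le_sum hM hi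
  have hcN : 0 ≤ c * N i := mul_nonneg hc (hN i hi)
  gcongr
  linarith [hM i hi]

theorem stmt_18_general (n : ℕ) (α : ℝ) (hα : α ∈ Set.Ioo (0 : ℝ) 1) (R : ℝ)
    (Ω : Set (EuclideanSpace ℝ (Fin n)))
    -- a fixed finite atlas of `C^{1,α}` local parametrizations of the boundary `∂Ω`
    (k : ℕ)
    (γ : Fin k → EuclideanSpace ℝ (Fin (n - 1)) → EuclideanSpace ℝ (Fin n))
    (hγmap : ∀ l, Set.MapsTo (γ l)
      (Metric.closedBall (0 : EuclideanSpace ℝ (Fin (n - 1))) 1) (frontier Ω)) :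
    ∃ c₁ > (0 : ℝ),
      ∀ u : EuclideanSpace ℝ (Fin n) → ℝ → ℝ, ∀ v : EuclideanSpace ℝ (Fin n) → ℝ,
        (∀ l, memC1aOn α
          ((Metric.closedBall (0 : EuclideanSpace ℝ (Fin (n - 1))) 1) ×ˢ Set.Icc (-R) R)
          (fun p => u (γ l p.1) p.2)) →
        (∀ l, memC1aOn α (Metric.closedBall (0 : EuclideanSpace ℝ (Fin (n - 1))) 1)
          (v ∘ γ l)) →
        (∀ t ∈ frontier Ω, v t ∈ Set.Icc (-R) R) →
        (∀ l, memC1aOn α (Metric.closedBall (0 : EuclideanSpace ℝ (Fin (n - 1))) 1)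
          ((fun t => u t (v t)) ∘ γ l)) ∧
        (∑ l, c1Norm α (Metric.closedBall (0 : EuclideanSpace ℝ (Fin (n - 1))) 1)
            ((fun t => u t (v t)) ∘ γ l))
          ≤ c₁ *
            (∑ l, c1Norm α
              ((Metric.closedBall (0 : EuclideanSpace ℝ (Fin (n - 1))) 1) ×ˢ Set.Icc (-R) R)
              (fun p => u (γ l p.1) p.2)) *
            (1 + ∑ l, c1Norm α (Metric.closedBall (0 : EuclideanSpace ℝ (Fin (n - 1))) 1)
              (v ∘ γ l)) ^ 2 := by
  set B := closedBall (0 : EuclideanSpace ℝ (Fin (n - 1))) 1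
  have hBconv : Convex ℝ B := convex_closedBall _ _
  have hBuniq : UniqueDiffOn ℝ B :=
    uniqueDiffOn_convex hBconv ⟨0, ball_subset_interior_closedBall (mem_ball_self one_pos)⟩
  have hBS : IsCompact (B ×ˢ Icc (-R) R) := (isCompact_closedBall _ _).prod isCompact_Icc
  refine ⟨2, two_pos, fun u v hu hv hvR => ?_⟩
  have hmaps : ∀ l, MapsTo (fun p => (p, (v ∘ γ l) p)) B (B ×ˢ Icc (-R) R) :=
    fun l _ hp => ⟨hp, hvR _ (hγmap l hp)⟩
  refine ⟨fun l => (hu l).comp_graph hα.1.le hα.2.le hBconv hBuniq isBounded_closedBall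
      hBS.isBounded (hv l) (hmaps l), ?_⟩
  exact Finset.sum_le_mul_sum_mul_one_add_sum_sq _ zero_le_two (fun _ _ => c1Norm_nonneg)
    (fun _ _ => c1Norm_nonneg) fun l _ => c1Norm_comp_graph_le hα.1.le hα.2.le hBconv hBuniq
      isBounded_closedBall hBS (hu l) (hv l) (hmaps l)

theorem stmt_18 (n : ℕ) (hn : 2 ≤ n) (α : ℝ) (hα : α ∈ Set.Ioo (0 : ℝ) 1) (R : ℝ) (hR : 0 < R)
    (Ω : Set (EuclideanSpace ℝ (Fin n)))
    (hΩo : IsOpen Ω) (hΩb : Bornology.IsBounded Ω) (hΩc : IsConnected Ω)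
    -- a fixed finite atlas of `C^{1,α}` local parametrizations of the boundary `∂Ω`
    (k : ℕ) (hk : 0 < k)
    (γ : Fin k → EuclideanSpace ℝ (Fin (n - 1)) → EuclideanSpace ℝ (Fin n))
    (hγmap : ∀ l, Set.MapsTo (γ l)
      (Metric.closedBall (0 : EuclideanSpace ℝ (Fin (n - 1))) 1) (frontier Ω))
    (hγcover : frontier Ω ⊆
      ⋃ l, γ l '' Metric.closedBall (0 : EuclideanSpace ℝ (Fin (n - 1))) 1)
    (hγreg : ∀ l, memC1aOn α
      (Metric.closedBall (0 : EuclideanSpace ℝ (Fin (n - 1))) 1) (γ l)) :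
    ∃ c₁ > (0 : ℝ),
      ∀ u : EuclideanSpace ℝ (Fin n) → ℝ → ℝ, ∀ v : EuclideanSpace ℝ (Fin n) → ℝ,
        (∀ l, memC1aOn α
          ((Metric.closedBall (0 : EuclideanSpace ℝ (Fin (n - 1))) 1) ×ˢ Set.Icc (-R) R)
          (fun p => u (γ l p.1) p.2)) →
        (∀ l, memC1aOn α (Metric.closedBall (0 : EuclideanSpace ℝ (Fin (n - 1))) 1)
          (v ∘ γ l)) →
        (∀ t ∈ frontier Ω, v t ∈ Set.Icc (-R) R) →
        (∀ l, memC1aOn α (Metric.closedBall (0 : EuclideanSpace ℝ (Fin (n - 1))) 1)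
          ((fun t => u t (v t)) ∘ γ l)) ∧
        (∑ l, c1Norm α (Metric.closedBall (0 : EuclideanSpace ℝ (Fin (n - 1))) 1)
            ((fun t => u t (v t)) ∘ γ l))
          ≤ c₁ *
            (∑ l, c1Norm α
              ((Metric.closedBall (0 : EuclideanSpace ℝ (Fin (n - 1))) 1) ×ˢ Set.Icc (-R) R)
              (fun p => u (γ l p.1) p.2)) *
            (1 + ∑ l, c1Norm α (Metric.closedBall (0 : EuclideanSpace ℝ (Fin (n - 1))) 1)
              (v ∘ γ l)) ^ 2 :=
  stmt_18_general n α hα R Ω k γ hγmap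
end
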